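/- Let 𝔤 be a complex semisimple Lie algebra, 𝔭 a parabolic subalgebra with nilradical 𝔯 and Levi 𝔩, λ' ∈ 𝔥*. There is an algebra isomorphism 𝒰^{λ'} ∗ 𝒰(𝔭) ≅ 𝒰^{λ'} ⊗ 𝒰(𝔭) sending 1⊗x ↦ 1⊗x + x⊗1 and y⊗1 ↦ y⊗1, under which modules over the smash product on which 1⊗𝔭 acts integrably correspond to 𝒰^{λ'}⊗𝒰(𝔭)-modules on which the diagonal Δ𝔭 acts integrably. -/

import Mathlib

/-!
The elements `x - θ x` (`x ∈ 𝔭`) of the smash product commute with `A`, because `𝔭` acts on `A`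
by inner derivations, and they satisfy the relations of `𝔭`; hence `a ⊗ u ↦ a · Ψ u`, with
`Ψ x = x - θ x`, is an algebra map `A ⊗ 𝒰(𝔭) → S`. Composed with the linear map
`a ⊗ u ↦ (a ⊗ 1) · Φ u`, where `Φ x = θ x ⊗ 1 + 1 ⊗ x`, it becomes the PBW isomorphism
`A ⊗ 𝒰(𝔭) ≅ S`, and that linear map is onto, so the algebra map is bijective. Its inverse sends
`x ∈ 𝔭` to `θ x ⊗ 1 + 1 ⊗ x`, so it matches the action of `1 ⊗ 𝔭` with that of `Δ𝔭`.
-/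

open UniversalEnvelopingAlgebra

/-- The smash product `A ∗ 𝒰(𝔭)` for the (inner) adjoint action of 𝔭 on the central
quotient `A = 𝒰^{λ'}`, where `θ : 𝔭 → A` is the image of 𝔭 in the quotient. -/
structure SmashProduct (A : Type) [Ring A] [Algebra ℂ A]
    (L : Type) [LieRing L] [LieAlgebra ℂ L] (θ : L →ₗ[ℂ] A)
    (S : Type) [Ring S] [Algebra ℂ S] where
  jA : A →ₐ[ℂ] S
  jU : UniversalEnvelopingAlgebra ℂ L →ₐ[ℂ] S
  smash_rel : ∀ (x : L) (a : A),
    jU (ι ℂ x) * jA a = jA (θ x * a - a * θ x) + jA a * jU (ι ℂ x)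
  pbw : TensorProduct ℂ A (UniversalEnvelopingAlgebra ℂ L) ≃ₗ[ℂ] S
  pbw_apply : ∀ (a : A) (u : UniversalEnvelopingAlgebra ℂ L),
    pbw (a ⊗ₜ[ℂ] u) = jA a * jU u

/-- Local finiteness (integrability) of a set of operators on `M`: every vector lies in
a finite-dimensional subspace stable under all the operators. -/
def LocallyFiniteAction {M : Type} [AddCommGroup M] [Module ℂ M]
    (s : Set (Module.End ℂ M)) : Prop :=
  ∀ m : M, ∃ N : Submodule ℂ M, FiniteDimensional ℂ N ∧ m ∈ N ∧
    ∀ T ∈ s, ∀ n ∈ N, T n ∈ N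

section

attribute [local instance 100] LieRing.ofAssociativeRing

namespace LieHom

variable {R L B : Type*} [CommRing R] [LieRing L] [LieAlgebra R L] [LieRing B] [LieAlgebra R B]

def addOfLieEqZero (f g : L →ₗ⁅R⁆ B) (h : ∀ x y, ⁅f x, g y⁆ = 0) : L →ₗ⁅R⁆ B where
  toLinearMap := f.toLinearMap + g.toLinearMap
  map_lie' {x y} := by
    have hgf : ⁅g x, f y⁆ = 0 := by rw [← lie_skew, h, neg_zero]
    simp [hgf, h]

def subOfLieEq (f g : L →ₗ⁅R⁆ B) (h : ∀ x y, ⁅f x, g y⁆ = g ⁅x, y⁆) : L →ₗ⁅R⁆ B where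
  toLinearMap := f.toLinearMap - g.toLinearMap
  map_lie' {x y} := by
    have hgf : ⁅g x, f y⁆ = g ⁅x, y⁆ := by rw [← lie_skew, h, ← map_neg, lie_skew]
    simp only [AddHom.toFun_eq_coe, LinearMap.coe_toAddHom, LinearMap.sub_apply,
      coe_toLinearMap, sub_lie, lie_sub, h, hgf, map_lie]
    abel

end LieHom

namespace UniversalEnvelopingAlgebra

variable {R L : Type*} [CommRing R] [LieRing L] [LieAlgebra R L]

@[elab_as_elim]
theorem induction {P : UniversalEnvelopingAlgebra R L → Prop}
    (algebraMap : ∀ r, P (algebraMap R _ r)) (ι : ∀ x, P (ι R x))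
    (mul : ∀ u v, P u → P v → P (u * v)) (add : ∀ u v, P u → P v → P (u + v))
    (u : UniversalEnvelopingAlgebra R L) : P u := by
  obtain ⟨t, rfl⟩ : ∃ t, mkAlgHom R L t = u := RingCon.mk'_surjective _ u
  induction t using TensorAlgebra.induction with
  | algebraMap r => simpa using algebraMap r
  | ι x => exact ι x
  | mul s t hs ht => exact map_mul (mkAlgHom R L) s t ▸ mul _ _ hs ht
  | add s t hs ht => exact map_add (mkAlgHom R L) s t ▸ add _ _ hs ht

end UniversalEnvelopingAlgebra

open TensorProduct

section Diagonal

variable {R A L : Type*} [CommRing R] [Ring A] [Algebra R A] [LieRing L] [LieAlgebra R L]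
  (θ : L →ₗ⁅R⁆ A)

local notation "𝔘" => UniversalEnvelopingAlgebra R L

def diagLieHom : L →ₗ⁅R⁆ A ⊗[R] 𝔘 :=
  LieHom.addOfLieEqZero ((Algebra.TensorProduct.includeLeft : A →ₐ[R] A ⊗[R] 𝔘).toLieHom.comp θ)
    ((Algebra.TensorProduct.includeRight : 𝔘 →ₐ[R] A ⊗[R] 𝔘).toLieHom.comp (ι R))
    fun x y => by simp [LieRing.of_associative_ring_bracket]

def diagHom : 𝔘 →ₐ[R] A ⊗[R] 𝔘 := UniversalEnvelopingAlgebra.lift R (diagLieHom θ)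

theorem diagHom_ι (x : L) : diagHom θ (ι R x) = θ x ⊗ₜ 1 + 1 ⊗ₜ ι R x :=
  lift_ι_apply R _ x

def diagTwist : A ⊗[R] 𝔘 →ₗ[R] A ⊗[R] 𝔘 :=
  LinearMap.mul' R _ ∘ₗ
    TensorProduct.map Algebra.TensorProduct.includeLeft.toLinearMap (diagHom θ).toLinearMap

theorem diagTwist_tmul (a : A) (u : 𝔘) : diagTwist θ (a ⊗ₜ u) = (a ⊗ₜ 1) * diagHom θ u := rfl

theorem diagTwist_mul_one_tmul (ξ : A ⊗[R] 𝔘) (u : 𝔘) :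
    diagTwist θ (ξ * (1 ⊗ₜ u)) = diagTwist θ ξ * diagHom θ u := by
  induction ξ using TensorProduct.induction_on with
  | zero => simp
  | tmul a v =>
    simp only [Algebra.TensorProduct.tmul_mul_tmul, mul_one, diagTwist_tmul, map_mul, mul_assoc]
  | add ξ η hξ hη => simp only [add_mul, map_add, hξ, hη]

theorem diagTwist_tmul_one_mul (b : A) (ξ : A ⊗[R] 𝔘) :
    diagTwist θ ((b ⊗ₜ 1) * ξ) = (b ⊗ₜ 1) * diagTwist θ ξ := by
  induction ξ using TensorProduct.induction_on with
  | zero => simp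
  | tmul a v =>
    rw [Algebra.TensorProduct.tmul_mul_tmul, one_mul, diagTwist_tmul, diagTwist_tmul, ← mul_assoc,
      Algebra.TensorProduct.tmul_mul_tmul, mul_one]
  | add ξ η hξ hη => simp only [mul_add, map_add, hξ, hη]

theorem one_tmul_mul_mem_range_diagTwist (v : 𝔘) :
    ∀ u : 𝔘, 1 ⊗ₜ u ∈ LinearMap.range (diagTwist θ) →
      (1 : A) ⊗ₜ (u * v) ∈ LinearMap.range (diagTwist θ) := by
  induction v using UniversalEnvelopingAlgebra.induction with
  | algebraMap r =>
    intro u hu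
    rw [← Algebra.commutes, ← Algebra.smul_def, TensorProduct.tmul_smul]
    exact Submodule.smul_mem _ r hu
  | ι x =>
    rintro u ⟨ξ, hξ⟩
    have h : (1 : A) ⊗ₜ (u * ι R x) =
        diagTwist θ (ξ * (1 ⊗ₜ ι R x)) - diagTwist θ ((θ x ⊗ₜ 1) * ξ) := by
      simp only [diagTwist_mul_one_tmul, diagTwist_tmul_one_mul, hξ, diagHom_ι, mul_add,
        Algebra.TensorProduct.tmul_mul_tmul, one_mul, mul_one, add_sub_cancel_left]
    rw [h, ← map_sub]
    exact LinearMap.mem_range_self _ _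
  | mul v w hv hw => exact fun u hu => mul_assoc u v w ▸ hw _ (hv _ hu)
  | add v w hv hw =>
    intro u hu
    rw [mul_add, TensorProduct.tmul_add]
    exact Submodule.add_mem _ (hv _ hu) (hw _ hu)

theorem diagTwist_surjective : Function.Surjective (diagTwist θ) := by
  rw [← LinearMap.range_eq_top, eq_top_iff]
  rintro ξ -
  induction ξ using TensorProduct.induction_on with
  | zero => exact Submodule.zero_mem _
  | tmul a u =>
    obtain ⟨ξ, hξ⟩ :=
      one_tmul_mul_mem_range_diagTwist θ u 1 ⟨1 ⊗ₜ 1, by simp [diagTwist_tmul]⟩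
    refine ⟨(a ⊗ₜ 1) * ξ, ?_⟩
    rw [diagTwist_tmul_one_mul, hξ, Algebra.TensorProduct.tmul_mul_tmul, one_mul, one_mul,
      mul_one]
  | add ξ η hξ hη => exact Submodule.add_mem _ hξ hη

end Diagonal

namespace SmashProduct

variable {A L S : Type} [Ring A] [Algebra ℂ A] [LieRing L] [LieAlgebra ℂ L] [Ring S]
  [Algebra ℂ S] {θ : L →ₗ⁅ℂ⁆ A} (sp : SmashProduct A L θ S)

local notation "𝔘" => UniversalEnvelopingAlgebra ℂ L

theorem lie_jU_ι_jA (x : L) (a : A) : ⁅sp.jU (ι ℂ x), sp.jA a⁆ = sp.jA ⁅θ x, a⁆ := by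
  rw [LieRing.of_associative_ring_bracket, sp.smash_rel, add_sub_cancel_right,
    LieRing.of_associative_ring_bracket]
  rfl

theorem jA_lie (a b : A) : sp.jA ⁅a, b⁆ = ⁅sp.jA a, sp.jA b⁆ := sp.jA.toLieHom.map_lie a b

def untwistLieHom : L →ₗ⁅ℂ⁆ S :=
  LieHom.subOfLieEq (sp.jU.toLieHom.comp (ι ℂ)) (sp.jA.toLieHom.comp θ) fun x y => by
    simp only [LieHom.comp_apply, AlgHom.toLieHom_apply, lie_jU_ι_jA, LieHom.map_lie, jA_lie]

def untwist : 𝔘 →ₐ[ℂ] S := UniversalEnvelopingAlgebra.lift ℂ sp.untwistLieHom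

theorem untwist_ι (x : L) : sp.untwist (ι ℂ x) = sp.jU (ι ℂ x) - sp.jA (θ x) :=
  UniversalEnvelopingAlgebra.lift_ι_apply ℂ _ x

theorem commute_jA_untwist (a : A) (u : 𝔘) : Commute (sp.jA a) (sp.untwist u) := by
  induction u using UniversalEnvelopingAlgebra.induction with
  | algebraMap r => rw [AlgHom.commutes]; exact Algebra.commute_algebraMap_right r _
  | ι x =>
    rw [commute_iff_lie_eq, ← lie_skew, untwist_ι, sub_lie, lie_jU_ι_jA, jA_lie, sub_self,
      neg_zero]
  | mul u v hu hv => rw [map_mul]; exact hu.mul_right hv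
  | add u v hu hv => rw [map_add]; exact hu.add_right hv

def ofTensor : A ⊗[ℂ] 𝔘 →ₐ[ℂ] S :=
  Algebra.TensorProduct.lift sp.jA sp.untwist sp.commute_jA_untwist

theorem ofTensor_tmul (a : A) (u : 𝔘) : sp.ofTensor (a ⊗ₜ u) = sp.jA a * sp.untwist u :=
  Algebra.TensorProduct.lift_tmul _ _ _ a u

theorem ofTensor_tmul_one (a : A) : sp.ofTensor (a ⊗ₜ 1) = sp.jA a := by
  rw [ofTensor_tmul, map_one, mul_one]

theorem ofTensor_comp_diagHom : sp.ofTensor.comp (diagHom θ) = sp.jU := by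
  apply UniversalEnvelopingAlgebra.hom_ext
  ext x
  simp only [LieHom.comp_apply, AlgHom.toLieHom_apply, AlgHom.comp_apply, diagHom_ι, map_add,
    ofTensor_tmul, map_one, mul_one, one_mul, untwist_ι, add_sub_cancel]

theorem ofTensor_diagHom (u : 𝔘) : sp.ofTensor (diagHom θ u) = sp.jU u :=
  DFunLike.congr_fun sp.ofTensor_comp_diagHom u

theorem ofTensor_diagTwist (ξ : A ⊗[ℂ] 𝔘) : sp.ofTensor (diagTwist θ ξ) = sp.pbw ξ := by
  induction ξ using TensorProduct.induction_on with
  | zero => simp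
  | tmul a u => rw [diagTwist_tmul, map_mul, ofTensor_tmul_one, ofTensor_diagHom, sp.pbw_apply]
  | add ξ η hξ hη => rw [map_add, map_add, map_add, hξ, hη]

theorem ofTensor_bijective : Function.Bijective sp.ofTensor := by
  refine ⟨(injective_iff_map_eq_zero _).mpr fun ξ hξ => ?_, fun s => ?_⟩
  · obtain ⟨ξ, rfl⟩ := diagTwist_surjective θ ξ
    rw [ofTensor_diagTwist, LinearEquiv.map_eq_zero_iff] at hξ
    rw [hξ, map_zero]
  · exact ⟨diagTwist θ (sp.pbw.symm s), by rw [ofTensor_diagTwist, LinearEquiv.apply_symm_apply]⟩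

noncomputable def tensorEquiv : A ⊗[ℂ] 𝔘 ≃ₐ[ℂ] S :=
  AlgEquiv.ofBijective sp.ofTensor sp.ofTensor_bijective

theorem tensorEquiv_apply (ξ : A ⊗[ℂ] 𝔘) : sp.tensorEquiv ξ = sp.ofTensor ξ := rfl

end SmashProduct

end

theorem smash_iso_tensor_for_central_quotient_general
    (g : Type) [LieRing g] [LieAlgebra ℂ g]            -- the semisimple Lie algebra 𝔤
    (p : LieSubalgebra ℂ g)                             -- the parabolic subalgebra 𝔭
    (A : Type) [Ring A] [Algebra ℂ A]                   -- the central quotient 𝒰^{λ'}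
    (q : UniversalEnvelopingAlgebra ℂ g →ₐ[ℂ] A)        -- quotient map 𝒰(𝔤) → 𝒰^{λ'}
    (θ : ↥p →ₗ[ℂ] A) (hθ : ∀ x : ↥p, θ x = q (ι ℂ (x : g)))
    (S : Type) [Ring S] [Algebra ℂ S]
    (sp : SmashProduct A ↥p θ S) :
    ∃ e : S ≃ₐ[ℂ] TensorProduct ℂ A (UniversalEnvelopingAlgebra ℂ ↥p),
      (∀ y : A, e (sp.jA y) = y ⊗ₜ[ℂ] 1) ∧
      (∀ x : ↥p, e (sp.jU (ι ℂ x)) = θ x ⊗ₜ[ℂ] 1 + (1 : A) ⊗ₜ[ℂ] ι ℂ x) ∧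
      -- module correspondence: a module over the smash product (given by σ) has
      -- integrable action of 1⊗𝔭 iff the corresponding 𝒰^{λ'} ⊗ 𝒰(𝔭)-module
      -- (given by σ ∘ e⁻¹) has integrable diagonal action Δ𝔭 = {x⊗1 + 1⊗x}:
      (∀ (M : Type) [AddCommGroup M] [Module ℂ M]
          (σ : S →ₐ[ℂ] Module.End ℂ M),
        LocallyFiniteAction {T | ∃ x : ↥p, T = σ (sp.jU (ι ℂ x))} ↔
        LocallyFiniteAction {T | ∃ x : ↥p,
          T = (σ.comp e.symm.toAlgHom) (θ x ⊗ₜ[ℂ] 1 + (1 : A) ⊗ₜ[ℂ] ι ℂ x)}) := by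
  let _ : LieRing A := LieRing.ofAssociativeRing
  let _ : LieRing (UniversalEnvelopingAlgebra ℂ g) := LieRing.ofAssociativeRing
  obtain ⟨θ, rfl⟩ : ∃ θ' : ↥p →ₗ⁅ℂ⁆ A, (θ' : ↥p →ₗ[ℂ] A) = θ :=
    ⟨(q.toLieHom.comp (ι ℂ)).comp p.incl, LinearMap.ext fun x => (hθ x).symm⟩
  have hdiag (x : ↥p) : sp.tensorEquiv (θ x ⊗ₜ[ℂ] 1 + 1 ⊗ₜ[ℂ] ι ℂ x) = sp.jU (ι ℂ x) := by
    rw [SmashProduct.tensorEquiv_apply, ← diagHom_ι, SmashProduct.ofTensor_diagHom]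
  refine ⟨sp.tensorEquiv.symm, fun y => ?_, fun x => ?_, fun M _ _ σ => ?_⟩
  · rw [AlgEquiv.symm_apply_eq, SmashProduct.tensorEquiv_apply, SmashProduct.ofTensor_tmul_one]
  · exact (AlgEquiv.symm_apply_eq _).mpr (hdiag x).symm
  · simp only [AlgEquiv.symm_symm, AlgHom.comp_apply, AlgEquiv.coe_toAlgHom,
      LieHom.coe_toLinearMap, hdiag]

theorem smash_iso_tensor_for_central_quotient
    (g : Type) [LieRing g] [LieAlgebra ℂ g]            -- the semisimple Lie algebra 𝔤
    (p : LieSubalgebra ℂ g)                             -- the parabolic subalgebra 𝔭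
    (A : Type) [Ring A] [Algebra ℂ A]                   -- the central quotient 𝒰^{λ'}
    (q : UniversalEnvelopingAlgebra ℂ g →ₐ[ℂ] A)        -- quotient map 𝒰(𝔤) → 𝒰^{λ'}
    (hq : Function.Surjective q)
    (θ : ↥p →ₗ[ℂ] A) (hθ : ∀ x : ↥p, θ x = q (ι ℂ (x : g)))
    (S : Type) [Ring S] [Algebra ℂ S]
    (sp : SmashProduct A ↥p θ S) :
    ∃ e : S ≃ₐ[ℂ] TensorProduct ℂ A (UniversalEnvelopingAlgebra ℂ ↥p),
      (∀ y : A, e (sp.jA y) = y ⊗ₜ[ℂ] 1) ∧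
      (∀ x : ↥p, e (sp.jU (ι ℂ x)) = θ x ⊗ₜ[ℂ] 1 + (1 : A) ⊗ₜ[ℂ] ι ℂ x) ∧
      -- module correspondence: a module over the smash product (given by σ) has
      -- integrable action of 1⊗𝔭 iff the corresponding 𝒰^{λ'} ⊗ 𝒰(𝔭)-module
      -- (given by σ ∘ e⁻¹) has integrable diagonal action Δ𝔭 = {x⊗1 + 1⊗x}:
      (∀ (M : Type) [AddCommGroup M] [Module ℂ M]
          (σ : S →ₐ[ℂ] Module.End ℂ M),
        LocallyFiniteAction {T | ∃ x : ↥p, T = σ (sp.jU (ι ℂ x))} ↔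
        LocallyFiniteAction {T | ∃ x : ↥p,
          T = (σ.comp e.symm.toAlgHom) (θ x ⊗ₜ[ℂ] 1 + (1 : A) ⊗ₜ[ℂ] ι ℂ x)}) :=
  smash_iso_tensor_for_central_quotient_general g p A q θ hθ S sp
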